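/- Let M > 0 and set R := M + 16π². For A ∈ ℝ, let r̃^A : ℝ → ℝ be the 1-periodic function defined on [0,1) by: r̃^A(x) = R for 0 ≤ x ≤ 1/4; r̃^A(x) = R + 4(A−R)(x − 1/4) for 1/4 < x < 1/2; r̃^A(x) = A for 1/2 ≤ x ≤ 3/4; r̃^A(x) = R + 4(A−R)(1 − x) for 3/4 < x < 1. Let λ, k ∈ ℝ and let ψ : ℝ → ℝ be twice continuously differentiable, 1-periodic, positive on ℝ, satisfying ψ'' + 2λψ' + (r̃^A + λ²)ψ = k ψ on ℝ. Then k > M. -/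

import Mathlib

open Real Set

/-!
On `[0, 1/4]` the potential is `R = M + 16π²`, and `x ↦ e^{-λx} sin (4πx)` is a positive
Dirichlet eigenfunction there for the eigenvalue `R - 16π² = M`. If `k ≤ M`, comparing `ψ` with it
through the twisted Wronskian `W = e^{λx} ((ψ' + λψ) sin (4πx) - 4πψ cos (4πx))` gives
`W' = e^{λx} ψ sin (4πx) (k - M) ≤ 0` on `[0, 1/4]`, while `W 0 = -4πψ(0) < 0 < W (1/4)`.
-/

theorem hasDerivAt_exp_mul_wronskian_sin {ψ ψ' : ℝ → ℝ} {ψ'' lam ω a x : ℝ}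
    (hψ : HasDerivAt ψ (ψ' x) x) (hψ' : HasDerivAt ψ' ψ'' x) :
    HasDerivAt
      (fun y => exp (lam * y) *
        ((ψ' y + lam * ψ y) * sin (ω * (y - a)) - ω * ψ y * cos (ω * (y - a))))
      (exp (lam * x) * sin (ω * (x - a)) *
        (ψ'' + 2 * lam * ψ' x + (lam ^ 2 + ω ^ 2) * ψ x)) x := by
  have hθ : HasDerivAt (fun y => ω * (y - a)) ω x := by
    simpa using ((hasDerivAt_id x).sub_const a).const_mul ω
  have hexp : HasDerivAt (fun y => exp (lam * y)) (exp (lam * x) * lam) x := by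
    simpa using ((hasDerivAt_id x).const_mul lam).exp
  exact (hexp.mul (((hψ'.add (hψ.const_mul lam)).mul hθ.sin).sub
    ((hψ.const_mul ω).mul hθ.cos))).congr_deriv
    (by simp only [Pi.mul_apply, Pi.add_apply, Pi.sub_apply]; ring)

/-- Sturm comparison with the principal Dirichlet eigenfunction `e^{-λx} sin (π (x - a) / (b - a))`
of `φ'' + 2λφ' + (λ² + (π / (b - a))²) φ = 0`. -/
theorem exists_lt_of_pos_solution_on_Icc {ψ c : ℝ → ℝ} {lam a b : ℝ} (hab : a < b)
    (hψ : Differentiable ℝ ψ) (hψ' : Differentiable ℝ (deriv ψ))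
    (hpos : ∀ x ∈ Icc a b, 0 < ψ x)
    (heq : ∀ x ∈ Ioo a b, deriv (deriv ψ) x + 2 * lam * deriv ψ x + c x * ψ x = 0) :
    ∃ x ∈ Ioo a b, c x < lam ^ 2 + (π / (b - a)) ^ 2 := by
  by_contra! hc
  set ω := π / (b - a)
  have hω : 0 < ω := div_pos pi_pos (sub_pos.2 hab)
  have hωb : ω * (b - a) = π := div_mul_cancel₀ π (sub_pos.2 hab).ne'
  set W := fun y => exp (lam * y) *
    ((deriv ψ y + lam * ψ y) * sin (ω * (y - a)) - ω * ψ y * cos (ω * (y - a)))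
  have hW : ∀ x, HasDerivAt W (exp (lam * x) * sin (ω * (x - a)) *
      (deriv (deriv ψ) x + 2 * lam * deriv ψ x + (lam ^ 2 + ω ^ 2) * ψ x)) x :=
    fun x => hasDerivAt_exp_mul_wronskian_sin (hψ x).hasDerivAt (hψ' x).hasDerivAt
  have hanti : AntitoneOn W (Icc a b) := by
    refine antitoneOn_of_deriv_nonpos (convex_Icc a b) (HasDerivAt.continuousOn fun x _ => hW x)
      (fun x _ => (hW x).differentiableAt.differentiableWithinAt) ?_
    intro x hx
    rw [interior_Icc] at hx
    have hsin : 0 < sin (ω * (x - a)) := by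
      refine sin_pos_of_pos_of_lt_pi (mul_pos hω (sub_pos.2 hx.1)) ?_
      calc ω * (x - a) < ω * (b - a) := by gcongr; exact hx.2
        _ = π := hωb
    have hsuper : deriv (deriv ψ) x + 2 * lam * deriv ψ x + (lam ^ 2 + ω ^ 2) * ψ x ≤ 0 := by
      nlinarith [heq x hx, hc x hx, hpos x (Ioo_subset_Icc_self hx)]
    rw [(hW x).deriv]
    exact mul_nonpos_of_nonneg_of_nonpos (by positivity) hsuper
  have hWa : W a = -(ω * ψ a * exp (lam * a)) := by simp [W]; ring
  have hWb : W b = ω * ψ b * exp (lam * b) := by simp [W, hωb]; ring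
  have hWba : W b ≤ W a := hanti (left_mem_Icc.2 hab.le) (right_mem_Icc.2 hab.le) hab.le
  have hψa := hpos a (left_mem_Icc.2 hab.le)
  have hψb := hpos b (right_mem_Icc.2 hab.le)
  rw [hWa, hWb] at hWba
  linarith [mul_pos (mul_pos hω hψa) (exp_pos (lam * a)),
    mul_pos (mul_pos hω hψb) (exp_pos (lam * b))]

theorem stmt16 (M lam k : ℝ)
    (R : ℝ) (hR : R = M + 16 * Real.pi ^ 2)
    (rt : ℝ → ℝ)
    (hrt1 : ∀ x : ℝ, 0 ≤ x → x ≤ 1/4 → rt x = R)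
    (ψ : ℝ → ℝ) (hψ : ContDiff ℝ 2 ψ)
    (hψpos : ∀ x, 0 < ψ x)
    (heq : ∀ x : ℝ,
      deriv (deriv ψ) x + 2 * lam * deriv ψ x + (rt x + lam ^ 2) * ψ x = k * ψ x) :
    M < k := by
  have hψ' : ContDiff ℝ 1 (deriv ψ) := (contDiff_succ_iff_deriv.mp hψ).2.2
  obtain ⟨x, hx, hlt⟩ := exists_lt_of_pos_solution_on_Icc
    (c := fun x => rt x + lam ^ 2 - k) (lam := lam)
    (by norm_num : (0 : ℝ) < 1 / 4) (hψ.differentiable (by norm_num))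
    (hψ'.differentiable one_ne_zero) (fun x _ => hψpos x) (fun x _ => by linarith [heq x])
  have hπ : (π / (1 / 4 - 0)) ^ 2 = 16 * π ^ 2 := by ring
  simp only [hrt1 x hx.1.le hx.2.le, hR, hπ] at hlt
  linarith
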